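/- arXiv:2109.05267 — 2 statements merged into one kernel-verified Lean document; each statement's English description precedes it below -/
import Mathlib

section
/- The function g(Z) = (exp(Z) + c)/Z is convex on Z > 0 whenever c ≥ -1. -/
/-!
Write `(exp Z + c)/Z = (exp Z - 1)/Z + (c + 1) Z⁻¹`. The second summand is convex since
`c + 1 ≥ 0`. The first has second derivative `(exp Z (Z² - 2Z + 2) - 2)/Z³`, whose numerator is nonnegative
because `exp Z ≥ 1 + Z + Z²/2` and `(1 + Z + Z²/2)(Z² - 2Z + 2) = 2 + Z⁴/2`.
-/

open Real Set

lemma two_le_exp_mul_sq_sub_two_mul_add_two {x : ℝ} (hx : 0 ≤ x) :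
    2 ≤ exp x * (x ^ 2 - 2 * x + 2) := by
  have hq : 0 ≤ x ^ 2 - 2 * x + 2 := by nlinarith [sq_nonneg (x - 1)]
  calc 2 ≤ (1 + x + x ^ 2 / 2) * (x ^ 2 - 2 * x + 2) := by nlinarith [pow_two_nonneg (x ^ 2)]
    _ ≤ exp x * (x ^ 2 - 2 * x + 2) := by gcongr; exact quadratic_le_exp_of_nonneg hx

lemma hasDerivAt_exp_sub_one_div {x : ℝ} (hx : x ≠ 0) :
    HasDerivAt (fun x => (exp x - 1) / x) (((x - 1) * exp x + 1) / x ^ 2) x := by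
  refine (((hasDerivAt_exp x).sub_const 1).fun_div (hasDerivAt_id' x) hx).congr_deriv ?_
  ring

lemma hasDerivAt_sub_one_mul_exp_add_one_div_sq {x : ℝ} (hx : x ≠ 0) :
    HasDerivAt (fun x => ((x - 1) * exp x + 1) / x ^ 2)
      ((exp x * (x ^ 2 - 2 * x + 2) - 2) / x ^ 3) x := by
  have hnum : HasDerivAt (fun x => (x - 1) * exp x + 1) (x * exp x) x := by
    refine ((((hasDerivAt_id' x).sub_const 1).fun_mul (hasDerivAt_exp x)).add_const 1
      ).congr_deriv ?_
    ring
  refine (hnum.fun_div (hasDerivAt_pow 2 x) (pow_ne_zero 2 hx)).congr_deriv ?_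
  push_cast
  field_simp
  ring

theorem convexOn_exp_sub_one_div : ConvexOn ℝ (Ioi 0) fun x => (exp x - 1) / x := by
  refine convexOn_of_hasDerivWithinAt2_nonneg (convex_Ioi 0)
    (fun x hx => ((continuous_exp.sub continuous_const).continuousAt.div continuousAt_id
      (ne_of_gt hx)).continuousWithinAt)
    (fun x hx => (hasDerivAt_exp_sub_one_div (ne_of_gt (interior_subset hx))).hasDerivWithinAt)
    (fun x hx => (hasDerivAt_sub_one_mul_exp_add_one_div_sq
      (ne_of_gt (interior_subset hx))).hasDerivWithinAt)
    fun x hx => ?_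
  have hx : 0 < x := interior_subset hx
  have hnum := two_le_exp_mul_sq_sub_two_mul_add_two hx.le
  exact div_nonneg (by linarith) (by positivity)

theorem convexOn_inv_Ioi : ConvexOn ℝ (Ioi 0) fun x : ℝ => x⁻¹ := by
  simpa using convexOn_zpow (𝕜 := ℝ) (-1)

/-- `Z ↦ (exp Z + c)/Z` is convex on `(0,∞)` whenever `c ≥ -1`. -/
theorem exp_add_const_div_convexOn (c : ℝ) (hc : c ≥ -1) :
    ConvexOn ℝ (Set.Ioi (0 : ℝ)) (fun Z => (Real.exp Z + c) / Z) := by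
  have hinv : ConvexOn ℝ (Ioi 0) fun Z : ℝ => (c + 1) • Z⁻¹ :=
    convexOn_inv_Ioi.smul (by linarith)
  refine (convexOn_exp_sub_one_div.add hinv).congr fun Z _ => ?_
  simp only [Pi.add_apply, smul_eq_mul]
  field_simp
  ring
end

section
/- The function G(j, Z) = a·j + (V·b/Z)·(exp(Z) + c) is jointly convex in (j, Z) on R × (0,∞), for constants a ≥ 0, V > 0, b > 0, c ≥ -1. -/
/-!
The term `a j` is linear, so joint convexity reduces to convexity of `Z ↦ (exp Z + c) / Z`
on `(0, ∞)`. Its second derivative is `(exp Z (Z² - 2Z + 2) + 2c) / Z³`, and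
`exp Z (Z² - 2Z + 2) ≥ 2` for `Z ≥ 0`, so the numerator is at least `2 (1 + c) ≥ 0`.
-/

open Real Set

lemma convexOn_exp_add_const_div {c : ℝ} (hc : -1 ≤ c) :
    ConvexOn ℝ (Ioi 0) fun x => (exp x + c) / x := by
  have hf' : ∀ x ∈ Ioi (0 : ℝ), HasDerivAt (fun x => (exp x + c) / x)
      ((x * exp x - exp x - c) / x ^ 2) x := fun x hx => by
    refine (((hasDerivAt_exp x).add_const c).div (hasDerivAt_id x) (ne_of_gt hx)).congr_deriv ?_
    simp only [id]
    ring
  have hf'' : ∀ x ∈ Ioi (0 : ℝ), HasDerivAt (fun x => (x * exp x - exp x - c) / x ^ 2)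
      ((exp x * (x ^ 2 - 2 * x + 2) + 2 * c) / x ^ 3) x := fun x hx => by
    have hx0 : x ≠ 0 := ne_of_gt hx
    refine (((((hasDerivAt_id x).mul (hasDerivAt_exp x)).sub (hasDerivAt_exp x)).sub_const c).div
      (hasDerivAt_pow 2 x) (pow_ne_zero 2 hx0)).congr_deriv ?_
    simp only [id, Pi.mul_apply, Pi.sub_apply]
    field_simp
    ring
  refine convexOn_of_hasDerivWithinAt2_nonneg (convex_Ioi 0)
    (fun x hx => (hf' x hx).continuousAt.continuousWithinAt)
    (fun x hx => (hf' x (interior_subset hx)).hasDerivWithinAt)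
    (fun x hx => (hf'' x (interior_subset hx)).hasDerivWithinAt) fun x hx => ?_
  have hx : 0 < x := interior_subset hx
  have := two_le_exp_mul_sq_sub_two_mul_add_two hx.le
  exact div_nonneg (by linarith) (pow_nonneg hx.le 3)

theorem energy_cost_jointly_convex_general
    (a V b c : ℝ) (hV : 0 < V) (hb : 0 < b) (hc : c ≥ -1) :
    ConvexOn ℝ ((Set.univ : Set ℝ) ×ˢ Set.Ioi (0 : ℝ))
      (fun p : ℝ × ℝ => a * p.1 + (V * b / p.2) * (Real.exp p.2 + c)) := by
  have hlin : ConvexOn ℝ (univ ×ˢ Ioi (0 : ℝ)) fun p : ℝ × ℝ => a * p.1 :=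
    (a • LinearMap.fst ℝ ℝ ℝ).convexOn (convex_univ.prod (convex_Ioi 0))
  have htx : ConvexOn ℝ (univ ×ˢ Ioi (0 : ℝ))
      fun p : ℝ × ℝ => (V * b) • ((exp p.2 + c) / p.2) := by
    rw [univ_prod]
    exact ((convexOn_exp_add_const_div hc).comp_linearMap (LinearMap.snd ℝ ℝ ℝ)).smul
      (mul_pos hV hb).le
  refine (hlin.add htx).congr fun p _ => ?_
  simp only [Pi.add_apply, smul_eq_mul]
  ring

/-- The total energy cost `G(j, Z) = a j + (V b / Z)(exp Z + c)` is jointly convex in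
`(j, Z)` on `ℝ × (0,∞)`, for constants `a ≥ 0`, `V > 0`, `b > 0`, `c ≥ -1`. -/
theorem energy_cost_jointly_convex
    (a V b c : ℝ) (ha : 0 ≤ a) (hV : 0 < V) (hb : 0 < b) (hc : c ≥ -1) :
    ConvexOn ℝ ((Set.univ : Set ℝ) ×ˢ Set.Ioi (0 : ℝ))
      (fun p : ℝ × ℝ => a * p.1 + (V * b / p.2) * (Real.exp p.2 + c)) :=
  energy_cost_jointly_convex_general a V b c hV hb hc
end
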